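/- arXiv:1408.4590 — 3 statements merged into one kernel-verified Lean document; each statement's English description precedes it below -/
import Mathlib

section
/- For SNR1, SNR2 ≥ 0 and INR1, INR2 > 0 (real numbers), the strict inequality min_{(i,j)∈{(1,2),(2,1)}} [ log(1 + SNRi/(1+INRj)) + log(1 + SNRj + INRj) ] < log(1+INR1) + log(1+INR2) + log(1 + SNR1/(1+INR2)) + log(1 + SNR2/(1+INR1)) holds, where log is to base 2. -/
/-!
Only the first term of the minimum is needed. Its summand `log(1 + SNR1/(1+INR2))` also
appears on the right, and the remaining right-hand side is the logarithm of
`(1+INR1)(1+INR2)(1+SNR2/(1+INR1)) = (1+INR1+SNR2)(1+INR2)`, which exceeds `1+SNR2+INR2`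
by `INR1 + INR1·INR2 + SNR2·INR2 > 0`.
-/

open Real

namespace Real

variable {b : ℝ}

theorem logb_one_add_add_logb_one_add_div {x y : ℝ} (hx : 0 < 1 + x) (hxy : 0 < 1 + x + y) :
    logb b (1 + x) + logb b (1 + y / (1 + x)) = logb b (1 + x + y) := by
  have hquot : 1 + y / (1 + x) = (1 + x + y) / (1 + x) := by field_simp
  rw [← logb_mul hx.ne' (by rw [hquot]; positivity), hquot, mul_div_cancel₀ _ hx.ne']

theorem logb_one_add_add_lt_add (hb : 1 < b) {u v : ℝ} (hu : 0 < u) (hv : 0 < v) :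
    logb b (1 + u + v) < logb b (1 + u) + logb b (1 + v) := by
  rw [← logb_mul (by positivity) (by positivity)]
  exact logb_lt_logb hb (by positivity) (by nlinarith [mul_pos hu hv])

end Real

theorem gaussian_claim_H2_general (SNR1 SNR2 INR1 INR2 : ℝ)
    (hS2 : 0 ≤ SNR2) (hI1 : 0 < INR1) (hI2 : 0 < INR2) :
    min (logb 2 (1 + SNR1 / (1 + INR2)) + logb 2 (1 + SNR2 + INR2))
        (logb 2 (1 + SNR2 / (1 + INR1)) + logb 2 (1 + SNR1 + INR1))
      < logb 2 (1 + INR1) + logb 2 (1 + INR2)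
        + logb 2 (1 + SNR1 / (1 + INR2)) + logb 2 (1 + SNR2 / (1 + INR1)) := by
  have key : logb 2 (1 + SNR2 + INR2)
      < logb 2 (1 + INR1) + logb 2 (1 + INR2) + logb 2 (1 + SNR2 / (1 + INR1)) :=
    calc logb 2 (1 + SNR2 + INR2)
        ≤ logb 2 (1 + (INR1 + SNR2) + INR2) :=
          logb_le_logb_of_le (by norm_num) (by positivity) (by linarith)
      _ < logb 2 (1 + (INR1 + SNR2)) + logb 2 (1 + INR2) :=
          logb_one_add_add_lt_add (by norm_num) (by positivity) hI2
      _ = logb 2 (1 + INR1) + logb 2 (1 + INR2) + logb 2 (1 + SNR2 / (1 + INR1)) := by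
          rw [← add_assoc, ← logb_one_add_add_logb_one_add_div (by positivity) (by positivity)]
          ring
  exact (min_le_left _ _).trans_lt (by linarith)

/-- Claim H.2 of the paper: for `SNR1, SNR2 ≥ 0` and `INR1, INR2 > 0`,
the perfect-feedback sum-rate bound is strictly less than
`log(1+INR1) + log(1+INR2) + log(1+SNR1/(1+INR2)) + log(1+SNR2/(1+INR1))`
(logs base 2). -/
theorem gaussian_claim_H2 (SNR1 SNR2 INR1 INR2 : ℝ)
    (hS1 : 0 ≤ SNR1) (hS2 : 0 ≤ SNR2) (hI1 : 0 < INR1) (hI2 : 0 < INR2) :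
    min (logb 2 (1 + SNR1 / (1 + INR2)) + logb 2 (1 + SNR2 + INR2))
        (logb 2 (1 + SNR2 / (1 + INR1)) + logb 2 (1 + SNR1 + INR1))
      < logb 2 (1 + INR1) + logb 2 (1 + INR2)
        + logb 2 (1 + SNR1 / (1 + INR2)) + logb 2 (1 + SNR2 / (1 + INR1)) :=
  gaussian_claim_H2_general SNR1 SNR2 INR1 INR2 hS2 hI1 hI2
end

section
/- For nonnegative reals SNR1, INR1, INR2: log(1 + SNR1/(1+INR2)) + log(1 + INR2) − 2·log 3 ≤ log(1+SNR1) + log(1 + INR2/(1+SNR1)) ≤ log(3 + SNR1/(1+INR2)) + log(2 + INR2), where log is base 2. In particular the achievable bound A1+B2 of the paper is within 2·log 3 of the outer bound on R1. -/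
open Real

/-! The first two logarithms on the left and the two in the middle both sum to
`log (1 + SNR1 + INR2)`, since `(1 + a / x) * x = x + a`. So the lower bound only costs
`2 log 3 ≥ 0`, and the upper bound compares the left-hand pair with the right-hand pair
term by term. -/

theorem logb_add_logb_one_add_div {b x a : ℝ} (hx : 0 < x) (hxa : 0 < x + a) :
    logb b x + logb b (1 + a / x) = logb b (x + a) := by
  have h : 1 + a / x = (x + a) / x := by field_simp
  rw [h, ← logb_mul hx.ne' (div_pos hxa hx).ne', mul_div_cancel₀ _ hx.ne']

theorem gap_A1_B2_general (SNR1 INR2 : ℝ)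
    (hS1 : 0 ≤ SNR1) (hI2 : 0 ≤ INR2) :
    logb 2 (1 + SNR1 / (1 + INR2)) + logb 2 (1 + INR2) - 2 * logb 2 3
      ≤ logb 2 (1 + SNR1) + logb 2 (1 + INR2 / (1 + SNR1))
    ∧ logb 2 (1 + SNR1) + logb 2 (1 + INR2 / (1 + SNR1))
      ≤ logb 2 (3 + SNR1 / (1 + INR2)) + logb 2 (2 + INR2) := by
  have hA : logb 2 (1 + SNR1 / (1 + INR2)) + logb 2 (1 + INR2) = logb 2 (1 + SNR1 + INR2) := by
    rw [add_comm, logb_add_logb_one_add_div (by positivity) (by positivity), add_right_comm]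
  have hB : logb 2 (1 + SNR1) + logb 2 (1 + INR2 / (1 + SNR1)) = logb 2 (1 + SNR1 + INR2) :=
    logb_add_logb_one_add_div (by positivity) (by positivity)
  have hlog3 : 0 ≤ logb 2 3 := logb_nonneg (by norm_num) (by norm_num)
  refine ⟨by linarith, ?_⟩
  rw [hB, ← hA]
  gcongr <;> norm_num

/-- The achievable bound `A1 + B2` is within `2·log 3` of the outer bound on
`R1`: `log(1+SNR1/(1+INR2)) + log(1+INR2) − 2 log 3
  ≤ log(1+SNR1) + log(1+INR2/(1+SNR1))
  ≤ log(3+SNR1/(1+INR2)) + log(2+INR2)` (logs base 2). -/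
theorem gap_A1_B2 (SNR1 INR1 INR2 : ℝ)
    (hS1 : 0 ≤ SNR1) (hI1 : 0 ≤ INR1) (hI2 : 0 ≤ INR2) :
    logb 2 (1 + SNR1 / (1 + INR2)) + logb 2 (1 + INR2) - 2 * logb 2 3
      ≤ logb 2 (1 + SNR1) + logb 2 (1 + INR2 / (1 + SNR1))
    ∧ logb 2 (1 + SNR1) + logb 2 (1 + INR2 / (1 + SNR1))
      ≤ logb 2 (3 + SNR1 / (1 + INR2)) + logb 2 (2 + INR2) :=
  gap_A1_B2_general SNR1 INR2 hS1 hI2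
end

section
/- For p ∈ [0,1] and α ≥ 0, define d(α,p) = min(1−α/2, 1−(1−p)·α) for α ≤ 1/2, d(α,p) = min(1−α/2, p+(1−p)·α) for 1/2 ≤ α ≤ 1, and d(α,p) = min(α/2, (1−p)+p·α) for α ≥ 1. Then for every α ≥ 0 with α ≠ 1 and every p ≥ 1/2, d(α,p) equals the perfect-feedback GDoF d(α,1) = max(1−α/2, α/2). -/
/-! For `p ≥ 1/2` the feedback term of `dGDoF α p` never binds, so the minimum is the
perfect-feedback branch `1 - α/2` (for `α ≤ 1`) or `α/2` (for `α > 1`), independent of `p`: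
the three regimes reduce to `(1 - p) α ≤ α/2`, `(1 - p)(1 - α) ≤ α/2` and
`α/2 ≤ (1 - p) + p α`, each immediate from `p ≥ 1/2` in its range of `α`. -/

/-- Symmetric generalized degrees of freedom of the symmetric Gaussian IC with
intermittent feedback probability `p` (Corollary 3 of the paper). -/
noncomputable def dGDoF (α p : ℝ) : ℝ :=
  if α ≤ 1 / 2 then min (1 - α / 2) (1 - (1 - p) * α)
  else if α ≤ 1 then min (1 - α / 2) (p + (1 - p) * α)
  else min (α / 2) ((1 - p) + p * α)

theorem dGDoF_eq_one_sub_half_of_le_one {α p : ℝ} (hp : 1 / 2 ≤ p) (hα₀ : 0 ≤ α)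
    (hα₁ : α ≤ 1) : dGDoF α p = 1 - α / 2 := by
  unfold dGDoF
  split_ifs <;> exact min_eq_left (by nlinarith)

theorem dGDoF_eq_half_of_one_lt {α p : ℝ} (hp : 1 / 2 ≤ p) (hα : 1 < α) :
    dGDoF α p = α / 2 := by
  have hα' : ¬α ≤ 1 / 2 := by linarith
  rw [dGDoF, if_neg hα', if_neg hα.not_ge]
  exact min_eq_left (by nlinarith)

theorem gdof_eq_perfect_of_half_le_general (p : ℝ) (hp : 1 / 2 ≤ p)
    (α : ℝ) (hα : 0 ≤ α) :
    dGDoF α p = dGDoF α 1 ∧ dGDoF α 1 = max (1 - α / 2) (α / 2) := by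
  rcases le_or_gt α 1 with hα₁ | hα₁
  · rw [dGDoF_eq_one_sub_half_of_le_one hp hα hα₁,
      dGDoF_eq_one_sub_half_of_le_one (by norm_num) hα hα₁, max_eq_left (by linarith)]
    exact ⟨rfl, rfl⟩
  · rw [dGDoF_eq_half_of_one_lt hp hα₁, dGDoF_eq_half_of_one_lt (by norm_num) hα₁,
      max_eq_right (by linarith)]
    exact ⟨rfl, rfl⟩

/-- For `p ≥ 1/2` (and `p ≤ 1`), the intermittent-feedback GDoF equals the
perfect-feedback GDoF `d(α,1) = max(1 − α/2, α/2)` for every `α ≥ 0`, `α ≠ 1`. -/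
theorem gdof_eq_perfect_of_half_le (p : ℝ) (hp : 1 / 2 ≤ p) (hp1 : p ≤ 1)
    (α : ℝ) (hα : 0 ≤ α) (hα1 : α ≠ 1) :
    dGDoF α p = dGDoF α 1 ∧ dGDoF α 1 = max (1 - α / 2) (α / 2) :=
  gdof_eq_perfect_of_half_le_general p hp α hα
end
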